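/- Let N ∈ ℕ, λ > 0 be fixed, let R > 0, and write M = M(N,λ,R) with M ≥ 1. Let S ⊂ [0,R] be a finite set with sup S = R containing exactly M + 1 points. Then ω_{N,λ}(S) ≤ R/M, and equality ω_{N,λ}(S) = R/M holds if and only if S consists of M + 1 equidistant points at mutual distance R/M, i.e. S = {k·R/M : k = 0,1,…,M}. -/
import Mathlib


/-- The minimal number of closed intervals of length `ε` needed to cover `S`
(the `ε`-covering number `M(ε, S)`). -/
noncomputable def coveringNumber (ε : ℝ) (S : Set ℝ) : ℕ :=
  sInf {n : ℕ | ∃ c : Fin n → ℝ, S ⊆ ⋃ i, Set.Icc (c i) (c i + ε)}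

/-- `M(N, λ, R) = N² - 1 + ⌊λR/π⌋`. -/
noncomputable def MBound (N : ℕ) (lam R : ℝ) : ℝ :=
  (N : ℝ) ^ 2 - 1 + ⌊lam * R / Real.pi⌋

/-- The `(N, λ)`-metric span of `S`:
`ω_{N,λ}(S) = max {0, sup_{ε>0} ε (M(ε,S) - M(N,λ,R(S)))}`, where `R(S) = sup S`. -/
noncomputable def metricSpan (N : ℕ) (lam : ℝ) (S : Set ℝ) : ℝ :=
  max 0 (sSup {x : ℝ | ∃ ε > 0,
    x = ε * ((coveringNumber ε S : ℝ) - MBound N lam (sSup S))})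

lemma card_mem_coverSet (ε : ℝ) (hε : 0 ≤ ε) (S : Finset ℝ) :
    S.card ∈ {n : ℕ | ∃ c : Fin n → ℝ, (S : Set ℝ) ⊆ ⋃ i, Set.Icc (c i) (c i + ε)} := by
  refine ⟨fun i => (S.equivFin.symm i : ℝ), fun s hs => ?_⟩
  have hs' : s ∈ S := hs
  refine Set.mem_iUnion.2 ⟨S.equivFin ⟨s, hs'⟩, ?_⟩
  simp only [Equiv.symm_apply_apply]
  exact ⟨le_rfl, le_add_of_nonneg_right hε⟩

lemma coveringNumber_le_card (ε : ℝ) (hε : 0 ≤ ε) (S : Finset ℝ) :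
    coveringNumber ε ↑S ≤ S.card :=
  Nat.sInf_le (card_mem_coverSet ε hε S)

lemma card_le_coveringNumber (ε : ℝ) (hε : 0 ≤ ε) (S : Finset ℝ)
    (hsep : ∀ a ∈ S, ∀ b ∈ S, a ≠ b → ε < |a - b|) :
    S.card ≤ coveringNumber ε ↑S := by
  refine le_csInf ⟨S.card, card_mem_coverSet ε hε S⟩ ?_
  rintro n ⟨c, hc⟩
  have hch : ∀ a : {x // x ∈ S}, ∃ i : Fin n, (a : ℝ) ∈ Set.Icc (c i) (c i + ε) := by
    intro a
    exact Set.mem_iUnion.1 (hc a.2)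
  have hinj : Function.Injective (fun a : {x // x ∈ S} => (hch a).choose) := by
    intro a b hab
    by_contra hne
    have hne' : (a : ℝ) ≠ (b : ℝ) := fun h => hne (Subtype.ext h)
    have ha := (hch a).choose_spec
    have hb := (hch b).choose_spec
    have hab' : (hch a).choose = (hch b).choose := hab
    rw [hab'] at ha
    have : |(a : ℝ) - (b : ℝ)| ≤ ε := by
      rw [abs_sub_le_iff]
      constructor <;> [linarith [ha.1, ha.2, hb.1, hb.2]; linarith [ha.1, ha.2, hb.1, hb.2]]
    exact absurd this (not_le.2 (hsep a a.2 b b.2 hne'))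
  calc S.card = Fintype.card {x // x ∈ S} := (Fintype.card_coe S).symm
    _ ≤ Fintype.card (Fin n) := Fintype.card_le_of_injective _ hinj
    _ = n := Fintype.card_fin n

/-- Extremality of the equidistant configuration: if `S ⊆ [0,R]` with `sup S = R`
contains exactly `M + 1` points, where `M = M(N,λ,R) ≥ 1`, then
`ω_{N,λ}(S) ≤ R/M`, with equality if and only if `S` consists of `M + 1` equidistant
points at mutual distance `R/M`. -/
theorem stmt16
    (N : ℕ) (lam R : ℝ) (hlam : 0 < lam) (hR : 0 < R)
    (M : ℕ) (hM : (M : ℝ) = MBound N lam R) (hM1 : 1 ≤ M)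
    (S : Finset ℝ) (hS : ∀ s ∈ S, s ∈ Set.Icc 0 R)
    (hsup : sSup (S : Set ℝ) = R)
    (hcard : S.card = M + 1) :
    metricSpan N lam ↑S ≤ R / M ∧
    (metricSpan N lam ↑S = R / M ↔
      (S : Set ℝ) = (fun i : ℕ => (i : ℝ) * R / M) '' Set.Iic M) := by
  have hM0 : (0 : ℝ) < M := by exact_mod_cast hM1
  have hSne : S.Nonempty := Finset.card_pos.mp (by omega)
  -- The increasing enumeration of S
  set x : Fin (M + 1) → ℝ := ⇑(S.orderEmbOfFin hcard) with hxdef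
  have hxmono : StrictMono x := (S.orderEmbOfFin hcard).strictMono
  have hxmem : ∀ i, x i ∈ S := fun i => S.orderEmbOfFin_mem hcard i
  have hxsurj : ∀ s ∈ S, ∃ i, x i = s := by
    intro s hs
    have : s ∈ Set.range x := by
      rw [hxdef, Finset.range_orderEmbOfFin]; exact hs
    exact this
  set y : ℕ → ℝ := fun k => x ⟨min k M, by omega⟩ with hydef
  have hyx : ∀ k, k ≤ M → ∀ (h : k < M + 1), y k = x ⟨k, h⟩ := by
    intro k hk h
    simp only [hydef, Nat.min_eq_left hk]
  have hysmono : ∀ a b, a < b → b ≤ M → y a < y b := by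
    intro a b hab hb
    rw [hyx a (by omega) (by omega), hyx b (by omega) (by omega)]
    exact hxmono (by exact Fin.mk_lt_mk.2 hab)
  have hymono : ∀ a b, a ≤ b → b ≤ M → y a ≤ y b := by
    intro a b hab hb
    rcases eq_or_lt_of_le hab with h | h
    · rw [h]
    · exact (hysmono a b h hb).le
  have hymem : ∀ k, y k ∈ S := fun k => hxmem _
  have hysurj : ∀ s ∈ S, ∃ k ≤ M, y k = s := by
    intro s hs
    obtain ⟨i, hi⟩ := hxsurj s hs
    refine ⟨i.val, by omega, ?_⟩
    rw [hyx i.val (by omega) i.isLt]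
    simpa using hi
  have hub : ∀ s ∈ S, s ≤ y M := by
    intro s hs
    obtain ⟨k, hk, rfl⟩ := hysurj s hs
    exact hymono k M hk le_rfl
  have hyM : y M = R := by
    refine le_antisymm ((hS _ (hymem M)).2) ?_
    rw [← hsup]
    exact csSup_le (Finset.coe_nonempty.2 hSne) hub
  have hy0 : 0 ≤ y 0 := (hS _ (hymem 0)).1
  -- the minimal gap g
  have hMne : (Finset.range M).Nonempty := ⟨0, Finset.mem_range.2 (by omega)⟩
  set g : ℝ := (Finset.range M).inf' hMne (fun k => y (k + 1) - y k) with hgdef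
  have hgle : ∀ k < M, g ≤ y (k + 1) - y k := fun k hk =>
    Finset.inf'_le _ (Finset.mem_range.2 hk)
  obtain ⟨k₀, hk₀mem, hk₀⟩ := Finset.exists_mem_eq_inf' hMne (fun k => y (k + 1) - y k)
  rw [← hgdef] at hk₀
  have hk₀M : k₀ < M := Finset.mem_range.1 hk₀mem
  have hg0 : 0 < g := by
    rw [hk₀]
    have := hysmono k₀ (k₀ + 1) (by omega) (by omega)
    linarith
  -- separation: distinct points of S are at distance at least g
  have hsep : ∀ a ∈ S, ∀ b ∈ S, a ≠ b → g ≤ |a - b| := by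
    have key : ∀ i j, i < j → j ≤ M → g ≤ y j - y i := by
      intro i j hij hj
      have h1 := hgle i (by omega)
      have h2 := hymono (i + 1) j (by omega) hj
      linarith
    intro a ha b hb hab
    obtain ⟨i, hi, rfl⟩ := hysurj a ha
    obtain ⟨j, hj, rfl⟩ := hysurj b hb
    rcases lt_trichotomy i j with h | h | h
    · rw [abs_sub_comm, abs_of_nonneg (by linarith [hysmono i j h hj])]
      exact key i j h hj
    · exact absurd (by rw [h]) hab
    · rw [abs_of_nonneg (by linarith [hysmono j i h hi])]
      exact key j i h hi
  -- covering number facts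
  have hcoveq : ∀ ε : ℝ, 0 < ε → ε < g → coveringNumber ε ↑S = M + 1 := by
    intro ε hε hεg
    refine le_antisymm (hcard ▸ coveringNumber_le_card ε hε.le S) ?_
    refine hcard ▸ card_le_coveringNumber ε hε.le S ?_
    intro a ha b hb hab
    exact lt_of_lt_of_le hεg (hsep a ha b hb hab)
  have hcovM : ∀ ε : ℝ, g ≤ ε → coveringNumber ε ↑S ≤ M := by
    intro ε hε
    have hε0 : 0 < ε := lt_of_lt_of_le hg0 hε
    apply Nat.sInf_le
    refine ⟨fun i : Fin M => if (i : ℕ) ≤ k₀ then y i else y ((i : ℕ) + 1), fun s hs => ?_⟩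
    obtain ⟨j, hj, rfl⟩ := hysurj s hs
    rcases lt_trichotomy j (k₀ + 1) with h | h | h
    · refine Set.mem_iUnion.2 ⟨⟨j, by omega⟩, ?_⟩
      simp only [show j ≤ k₀ by omega, if_pos]
      exact ⟨le_rfl, by linarith⟩
    · refine Set.mem_iUnion.2 ⟨⟨k₀, hk₀M⟩, ?_⟩
      simp only [le_refl, if_pos]
      subst h
      constructor
      · exact hymono k₀ (k₀ + 1) (by omega) (by omega)
      · have : y (k₀ + 1) - y k₀ = g := hk₀.symm
        linarith
    · refine Set.mem_iUnion.2 ⟨⟨j - 1, by omega⟩, ?_⟩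
      simp only [show ¬(j - 1 ≤ k₀) by omega, if_neg, not_false_iff]
      rw [show j - 1 + 1 = j by omega]
      exact ⟨le_rfl, by linarith⟩
  -- the sup set
  set T : Set ℝ := {t : ℝ | ∃ ε > 0,
      t = ε * ((coveringNumber ε (↑S : Set ℝ) : ℝ) - (M : ℝ))} with hTdef
  have hTub : ∀ t ∈ T, t ≤ g := by
    rintro t ⟨ε, hε, rfl⟩
    by_cases hlt : ε < g
    · rw [hcoveq ε hε hlt]
      have h1 : ((M + 1 : ℕ) : ℝ) - (M : ℝ) = 1 := by push_cast; ring
      rw [h1, mul_one]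
      exact hlt.le
    · have hcov := hcovM ε (not_lt.1 hlt)
      have hcov' : ((coveringNumber ε (↑S : Set ℝ) : ℕ) : ℝ) ≤ (M : ℝ) := by exact_mod_cast hcov
      nlinarith
  have hTmem : ∀ ε : ℝ, 0 < ε → ε < g → ε ∈ T := by
    intro ε hε hεg
    refine ⟨ε, hε, ?_⟩
    rw [hcoveq ε hε hεg]
    have h1 : ((M + 1 : ℕ) : ℝ) - (M : ℝ) = 1 := by push_cast; ring
    rw [h1, mul_one]
  have hTne : T.Nonempty := ⟨g / 2, hTmem (g / 2) (by linarith) (by linarith)⟩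
  have hTsup : sSup T = g := by
    refine le_antisymm (csSup_le hTne hTub) ?_
    refine le_of_forall_lt fun w hw => ?_
    set ε : ℝ := max ((w + g) / 2) (g / 2) with hεdef
    have hε0 : 0 < ε := lt_of_lt_of_le (by linarith) (le_max_right _ _)
    have hεg : ε < g := max_lt (by linarith) (by linarith)
    have hwε : w < ε := lt_of_lt_of_le (by linarith : w < (w + g) / 2) (le_max_left _ _)
    exact lt_of_lt_of_le hwε (le_csSup ⟨g, hTub⟩ (hTmem ε hε0 hεg))
  have hspan : metricSpan N lam ↑S = g := by
    rw [metricSpan, hsup, ← hM]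
    rw [show {x : ℝ | ∃ ε > 0,
        x = ε * ((coveringNumber ε (↑S : Set ℝ) : ℝ) - (M : ℝ))} = T from rfl]
    rw [hTsup]
    exact max_eq_right hg0.le
  -- chain inequalities
  have hlow : ∀ k, k ≤ M → y 0 + k * g ≤ y k := by
    intro k
    induction k with
    | zero => simp
    | succ n ih =>
      intro h
      have h1 := ih (by omega)
      have h2 := hgle n (by omega)
      push_cast
      linarith
  have hhigh : ∀ j, j ≤ M → y (M - j) + j * g ≤ y M := by
    intro j
    induction j with
    | zero => simp
    | succ n ih =>
      intro h
      have h1 := ih (by omega)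
      have h2 := hgle (M - (n + 1)) (by omega)
      rw [show M - (n + 1) + 1 = M - n by omega] at h2
      push_cast
      linarith
  have hgR : g ≤ R / M := by
    have h1 := hlow M le_rfl
    rw [hyM] at h1
    rw [le_div_iff₀ hM0]
    nlinarith
  refine ⟨hspan ▸ hgR, ?_⟩
  rw [hspan]
  constructor
  · -- equality implies equidistant
    intro hgeq
    have hMg : (M : ℝ) * g = R := by
      rw [hgeq]; field_simp
    have hyk : ∀ k, k ≤ M → y k = k * R / M := by
      intro k hk
      have hlo := hlow k hk
      have hhi := hhigh (M - k) (by omega)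
      rw [show M - (M - k) = k by omega, hyM] at hhi
      have hcast : ((M - k : ℕ) : ℝ) = (M : ℝ) - (k : ℝ) := by
        push_cast [Nat.cast_sub hk]; ring
      rw [hcast] at hhi
      have hykg : y k = k * g := by nlinarith
      rw [hykg, hgeq]; ring
    ext s
    simp only [Set.mem_image, Set.mem_Iic]
    constructor
    · intro hs
      obtain ⟨k, hk, rfl⟩ := hysurj s hs
      exact ⟨k, hk, (hyk k hk).symm⟩
    · rintro ⟨k, hk, rfl⟩
      rw [← hyk k hk]
      exact hymem k
  · -- equidistant implies equality
    intro hSeq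
    have hfmem : ∀ i : Fin (M + 1), ((i : ℕ) : ℝ) * R / M ∈ S := by
      intro i
      have : ((i : ℕ) : ℝ) * R / M ∈ (S : Set ℝ) := by
        rw [hSeq]
        exact ⟨(i : ℕ), Set.mem_Iic.mpr (Nat.lt_succ_iff.mp i.isLt), rfl⟩
      exact this
    have hfmono : StrictMono (fun i : Fin (M + 1) => ((i : ℕ) : ℝ) * R / M) := by
      intro i j hij
      have h1 : ((i : ℕ) : ℝ) < ((j : ℕ) : ℝ) := by exact_mod_cast hij
      have h2 : (0 : ℝ) < R / M := div_pos hR hM0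
      simp only [mul_div_assoc]
      exact mul_lt_mul_of_pos_right h1 h2
    have hfx : (fun i : Fin (M + 1) => ((i : ℕ) : ℝ) * R / M) = x :=
      Finset.orderEmbOfFin_unique hcard hfmem hfmono
    have hyval : ∀ k, k ≤ M → y k = (k : ℝ) * R / M := by
      intro k hk
      rw [hyx k hk (by omega), ← hfx]
    have hgap : ∀ k, k < M → y (k + 1) - y k = R / M := by
      intro k hk
      rw [hyval (k + 1) (by omega), hyval k (by omega)]
      push_cast
      field_simp
      ring
    refine le_antisymm ?_ ?_
    · rw [hk₀, hgap k₀ hk₀M]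
    · refine Finset.le_inf' hMne _ fun k hk => ?_
      rw [hgap k (Finset.mem_range.1 hk)]
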